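/- Let k_xy, k_yx, k_yz, k_zy, k_zw, k_wz, k_out, p, q, r, s be positive real numbers and x_in > 0. The map Φ has exactly one fixed point (x, y, z, w) with x ≥ 0, y ≥ 0, z ≥ 0 and w ≥ 0, namely x = √((x_in/(k_xy·p))·(1 + (k_yx/k_yz)·(1 + (k_zy/k_zw)·(1 + k_wz/k_out)))), y = √((x_in/(k_yz·q))·(1 + (k_zy/k_zw)·(1 + k_wz/k_out))), z = √((x_in/(k_zw·r))·(1 + k_wz/k_out)), w = √(x_in/(k_out·s)). -/

import Mathlib

/-- The four-level filter model map `Φ : ℝ⁴ → ℝ⁴`. -/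
def Phi (kxy kyx kyz kzy kzw kwz kout p q r s xin : ℝ) :
    ℝ × ℝ × ℝ × ℝ → ℝ × ℝ × ℝ × ℝ :=
  fun ⟨x, y, z, w⟩ =>
    ( x - kxy * p * x ^ 2 + kyx * q * y ^ 2 + xin,
      y + kxy * p * x ^ 2 - (kyx + kyz) * q * y ^ 2 + kzy * r * z ^ 2,
      z + kyz * q * y ^ 2 - (kzy + kzw) * r * z ^ 2 + kwz * s * w ^ 2,
      w + kzw * r * z ^ 2 - (kwz + kout) * s * w ^ 2 )

/-!
At a fixed point the net flux `kxy p x² - kyx q y²` from the first level into the second, and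
likewise between consecutive later levels and out of the last one, must all equal the inflow
`xin`. These balance equations are linear and triangular in the squares `x², y², z², w²`, so
they determine the squares by back-substitution from the last level, and nonnegativity picks
the square roots.
-/

theorem Phi_eq_self_iff (kxy kyx kyz kzy kzw kwz kout p q r s xin x y z w : ℝ) :
    Phi kxy kyx kyz kzy kzw kwz kout p q r s xin (x, y, z, w) = (x, y, z, w) ↔
      kxy * p * x ^ 2 = xin + kyx * q * y ^ 2 ∧
      kyz * q * y ^ 2 = xin + kzy * r * z ^ 2 ∧
      kzw * r * z ^ 2 = xin + kwz * s * w ^ 2 ∧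
      kout * s * w ^ 2 = xin := by
  simp only [Phi, Prod.mk.injEq]
  constructor
  · rintro ⟨e₁, e₂, e₃, e₄⟩
    refine ⟨by linear_combination -e₁, by linear_combination -e₁ - e₂,
      by linear_combination -e₁ - e₂ - e₃, by linear_combination -e₁ - e₂ - e₃ - e₄⟩
  · rintro ⟨e₁, e₂, e₃, e₄⟩
    refine ⟨by linear_combination -e₁, by linear_combination e₁ - e₂,
      by linear_combination e₂ - e₃, by linear_combination e₃ - e₄⟩

theorem balance_equations_iff {kxy kyx kyz kzy kzw kwz kout p q r s : ℝ}
    (hkxy : kxy ≠ 0) (hkyz : kyz ≠ 0) (hkzw : kzw ≠ 0) (hkout : kout ≠ 0)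
    (hp : p ≠ 0) (hq : q ≠ 0) (hr : r ≠ 0) (hs : s ≠ 0) (xin X Y Z W : ℝ) :
    (kxy * p * X = xin + kyx * q * Y ∧ kyz * q * Y = xin + kzy * r * Z ∧
        kzw * r * Z = xin + kwz * s * W ∧ kout * s * W = xin) ↔
      (X = (xin / (kxy * p)) * (1 + (kyx / kyz) * (1 + (kzy / kzw) * (1 + kwz / kout))) ∧
        Y = (xin / (kyz * q)) * (1 + (kzy / kzw) * (1 + kwz / kout)) ∧
        Z = (xin / (kzw * r)) * (1 + kwz / kout) ∧
        W = xin / (kout * s)) := by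
  constructor
  · rintro ⟨eX, eY, eZ, eW⟩
    have hW : W = xin / (kout * s) := by rw [← eW]; field_simp
    have hZ : Z = (xin + kwz * s * W) / (kzw * r) := by rw [← eZ]; field_simp
    have hY : Y = (xin + kzy * r * Z) / (kyz * q) := by rw [← eY]; field_simp
    have hX : X = (xin + kyx * q * Y) / (kxy * p) := by rw [← eX]; field_simp
    subst hW hZ hY hX
    refine ⟨?_, ?_, ?_, rfl⟩ <;> field_simp
  · rintro ⟨rfl, rfl, rfl, rfl⟩
    refine ⟨?_, ?_, ?_, ?_⟩ <;> field_simp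

theorem eq_sqrt_iff_sq_eq_and_nonneg {x a : ℝ} (ha : 0 ≤ a) : x = √a ↔ x ^ 2 = a ∧ 0 ≤ x := by
  rw [eq_comm, Real.sqrt_eq_cases, sq]
  simp [ha.not_gt]

theorem unique_nonneg_fixed_point_Phi
    (kxy kyx kyz kzy kzw kwz kout p q r s xin : ℝ)
    (hkxy : 0 < kxy) (hkyx : 0 < kyx) (hkyz : 0 < kyz) (hkzy : 0 < kzy)
    (hkzw : 0 < kzw) (hkwz : 0 < kwz) (hkout : 0 < kout)
    (hp : 0 < p) (hq : 0 < q) (hr : 0 < r) (hs : 0 < s) (hxin : 0 < xin)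
    (x y z w : ℝ) :
    (Phi kxy kyx kyz kzy kzw kwz kout p q r s xin (x, y, z, w) = (x, y, z, w) ∧
      0 ≤ x ∧ 0 ≤ y ∧ 0 ≤ z ∧ 0 ≤ w) ↔
    (x = Real.sqrt ((xin / (kxy * p)) *
            (1 + (kyx / kyz) * (1 + (kzy / kzw) * (1 + kwz / kout)))) ∧
     y = Real.sqrt ((xin / (kyz * q)) * (1 + (kzy / kzw) * (1 + kwz / kout))) ∧
     z = Real.sqrt ((xin / (kzw * r)) * (1 + kwz / kout)) ∧
     w = Real.sqrt (xin / (kout * s))) := by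
  rw [Phi_eq_self_iff,
    balance_equations_iff hkxy.ne' hkyz.ne' hkzw.ne' hkout.ne' hp.ne' hq.ne' hr.ne' hs.ne',
    eq_sqrt_iff_sq_eq_and_nonneg (by positivity), eq_sqrt_iff_sq_eq_and_nonneg (by positivity),
    eq_sqrt_iff_sq_eq_and_nonneg (by positivity), eq_sqrt_iff_sq_eq_and_nonneg (by positivity)]
  tauto
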